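/- Let (A, 𝔞) and (B, 𝔟) be Noetherian adic rings and φ : A → B a continuous ring homomorphism. Then the following are equivalent: (i) B/𝔟 is a finitely generated A-algebra (via the induced map A → B/𝔟); (ii) there exist n ∈ ℕ and an A-algebra homomorphism f : A[t₁,…,tₙ] → B from the polynomial ring in n variables, extending φ, such that 𝔟 equals the ideal of B generated by f(f⁻¹(𝔟)) and the composite A[t₁,…,tₙ] → B → B/𝔟 is surjective. -/
import Mathlib


/-- **Lemma 1.11** of Yekutieli's "Smooth Formal Embeddings and the Residue Complex":
characterization of formally finite type homomorphisms between Noetherian adic rings.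
Let `(A, 𝔞)` and `(B, 𝔟)` be Noetherian adic rings and `φ : A → B` a continuous ring
homomorphism.  Then `B/𝔟` is a finitely generated `A`-algebra iff there are `n` and an
`A`-algebra homomorphism `f : A[t₁,…,tₙ] → B` extending `φ` with `𝔟 = B · f(f⁻¹(𝔟))` and
`A[t₁,…,tₙ] → B/𝔟` surjective. -/
theorem stmt_0 {A B : Type*} [CommRing A] [CommRing B]
    [IsNoetherianRing A] [IsNoetherianRing B]
    (𝔞 : Ideal A) (𝔟 : Ideal B)
    (hA : IsAdicComplete 𝔞 A) (hB : IsAdicComplete 𝔟 B)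
    (φ : A →+* B) (hcont : 𝔞.map φ ≤ 𝔟.radical) :
    RingHom.FiniteType ((Ideal.Quotient.mk 𝔟).comp φ) ↔
      ∃ (n : ℕ) (f : MvPolynomial (Fin n) A →+* B),
        f.comp (MvPolynomial.C : A →+* MvPolynomial (Fin n) A) = φ ∧
        𝔟 = (𝔟.comap f).map f ∧
        Function.Surjective ((Ideal.Quotient.mk 𝔟).comp f) := by
  constructor
  · intro h
    letI : Algebra A B := φ.toAlgebra
    letI instQ : Algebra A (B ⧸ 𝔟) := ((Ideal.Quotient.mk 𝔟).comp φ).toAlgebra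
    have h' : Algebra.FiniteType A (B ⧸ 𝔟) := h
    obtain ⟨n₀, g, hg⟩ := Algebra.FiniteType.iff_quotient_mvPolynomial''.mp h'
    obtain ⟨m, c, hc⟩ := Submodule.fg_iff_exists_fin_generating_family.mp
      (IsNoetherian.noetherian 𝔟)
    have hlift : ∀ i : Fin n₀, ∃ b : B, Ideal.Quotient.mk 𝔟 b = g (MvPolynomial.X i) :=
      fun i => Ideal.Quotient.mk_surjective _
    choose v hv using hlift
    set w : Fin (n₀ + m) → B := fun i => Sum.elim v c (finSumFinEquiv.symm i) with hw
    refine ⟨n₀ + m, (MvPolynomial.aeval (R := A) w).toRingHom, ?_, ?_, ?_⟩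
    · ext a
      simp [MvPolynomial.aeval_C]
      rfl
    · have hcj : ∀ j : Fin m, c j ∈ Ideal.map (MvPolynomial.aeval (R := A) w).toRingHom
          (Ideal.comap (MvPolynomial.aeval (R := A) w).toRingHom 𝔟) := by
        intro j
        have hx : (MvPolynomial.aeval (R := A) w)
            (MvPolynomial.X (finSumFinEquiv (Sum.inr j))) = c j := by
          simp [hw]
        have hmem : (MvPolynomial.X (finSumFinEquiv (Sum.inr j)) : MvPolynomial (Fin (n₀+m)) A)
            ∈ Ideal.comap (MvPolynomial.aeval (R := A) w).toRingHom 𝔟 := by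
          rw [Ideal.mem_comap]
          show (MvPolynomial.aeval (R := A) w)
            (MvPolynomial.X (finSumFinEquiv (Sum.inr j))) ∈ 𝔟
          rw [hx]
          exact hc ▸ Submodule.subset_span ⟨j, rfl⟩
        have := Ideal.mem_map_of_mem (MvPolynomial.aeval (R := A) w).toRingHom hmem
        rwa [show (MvPolynomial.aeval (R := A) w).toRingHom
            (MvPolynomial.X (finSumFinEquiv (Sum.inr j))) = c j from hx] at this
      have hle : Ideal.span (Set.range c) ≤ Ideal.map (MvPolynomial.aeval (R := A) w).toRingHom
          (Ideal.comap (MvPolynomial.aeval (R := A) w).toRingHom 𝔟) :=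
        Ideal.span_le.mpr (by rintro _ ⟨j, rfl⟩; exact hcj j)
      exact le_antisymm (hc ▸ hle) Ideal.map_comap_le
    · let mkQ : B →ₐ[A] B ⧸ 𝔟 :=
        { Ideal.Quotient.mk 𝔟 with commutes' := fun a => rfl }
      intro q
      obtain ⟨p₀, rfl⟩ := hg q
      refine ⟨MvPolynomial.rename (fun i => finSumFinEquiv (Sum.inl i)) p₀, ?_⟩
      have key : (mkQ.comp (MvPolynomial.aeval (R := A) w)).comp
          (MvPolynomial.rename (fun i => finSumFinEquiv (Sum.inl i)) :
            MvPolynomial (Fin n₀) A →ₐ[A] MvPolynomial (Fin (n₀ + m)) A) = g := by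
        apply MvPolynomial.algHom_ext
        intro i
        simp only [AlgHom.comp_apply, MvPolynomial.rename_X]
        show mkQ ((MvPolynomial.aeval (R := A) w)
          (MvPolynomial.X (finSumFinEquiv (Sum.inl i)))) = g (MvPolynomial.X i)
        have : (MvPolynomial.aeval (R := A) w)
            (MvPolynomial.X (finSumFinEquiv (Sum.inl i))) = v i := by simp [hw]
        rw [this]
        exact hv i
      exact DFunLike.congr_fun key p₀
  · rintro ⟨n, f, hfC, -, hsurj⟩
    letI instQ : Algebra A (B ⧸ 𝔟) := ((Ideal.Quotient.mk 𝔟).comp φ).toAlgebra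
    have hcomm : ∀ a : A, ((Ideal.Quotient.mk 𝔟).comp f) (algebraMap A (MvPolynomial (Fin n) A) a)
        = algebraMap A (B ⧸ 𝔟) a := by
      intro a
      show Ideal.Quotient.mk 𝔟 (f (MvPolynomial.C a)) = Ideal.Quotient.mk 𝔟 (φ a)
      rw [show f (MvPolynomial.C a) = φ a from DFunLike.congr_fun hfC a]
    let G : MvPolynomial (Fin n) A →ₐ[A] B ⧸ 𝔟 :=
      { (Ideal.Quotient.mk 𝔟).comp f with commutes' := hcomm }
    have : Algebra.FiniteType A (B ⧸ 𝔟) :=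
      Algebra.FiniteType.iff_quotient_mvPolynomial''.mpr ⟨n, G, hsurj⟩
    exact this
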